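/- Let n ≥ 1 and let a, b, c ∈ ℤ_n, and let P(x,y) = a + b·x + c·y. Then (ℤ_n, P) is a quasigroup satisfying the external medial (paramedial) law P(P(w,x), P(y,z)) = P(P(z,x), P(y,w)) for all w, x, y, z ∈ ℤ_n if and only if b² = c² in ℤ_n and both b and c are units of ℤ_n. -/

import Mathlib

/-! An affine map `x ↦ d + b * x` is a bijection exactly when `b` is a unit, so the quasigroup
condition says that `b` and `c` are units. The two sides of the paramedial law differ by
`(b² - c²) (w - z)`, so the law holds exactly when `b² = c²`. -/

open Function

section Ring

variable {R : Type*} [Ring R]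

theorem isUnit_iff_bijective_add_mul {b : R} (d : R) :
    IsUnit b ↔ Bijective fun x => d + b * x := by
  rw [IsUnit.isUnit_iff_mulLeft_bijective, ← Equiv.comp_bijective _ (Equiv.addLeft d)]
  rfl

theorem isUnit_iff_bijective_add_mul_add {b : R} (d e : R) :
    IsUnit b ↔ Bijective fun x => d + b * x + e := by
  simp_rw [add_right_comm d]
  exact isUnit_iff_bijective_add_mul _

end Ring

theorem paramedial_add_mul_add_mul_iff {R : Type*} [CommRing R] (a b c : R) :
    (∀ w x y z : R,
        a + b * (a + b * w + c * x) + c * (a + b * y + c * z) =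
          a + b * (a + b * z + c * x) + c * (a + b * y + c * w)) ↔
      b ^ 2 = c ^ 2 := by
  refine ⟨fun h => ?_, fun h w x y z => by linear_combination (w - z) * h⟩
  linear_combination h 1 0 0 0

theorem stmt_6_general (n : ℕ) (a b c : ZMod n) :
    ((∀ u : ZMod n, Function.Bijective (fun x : ZMod n => a + b * x + c * u) ∧
        Function.Bijective (fun y : ZMod n => a + b * u + c * y)) ∧
      (∀ w x y z : ZMod n,
        a + b * (a + b * w + c * x) + c * (a + b * y + c * z) =
          a + b * (a + b * z + c * x) + c * (a + b * y + c * w))) ↔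
    (b ^ 2 = c ^ 2 ∧ IsUnit b ∧ IsUnit c) := by
  simp_rw [← isUnit_iff_bijective_add_mul_add, ← isUnit_iff_bijective_add_mul,
    paramedial_add_mul_add_mul_iff, forall_const]
  exact and_comm

/-- For `P(x,y) = a + b*x + c*y` over `ℤ_n` (`n ≥ 1`), `(ℤ_n, P)` is an external
medial quasigroup iff `b² = c²` and both `b` and `c` are units. -/
theorem stmt_6 (n : ℕ) (hn : 1 ≤ n) (a b c : ZMod n) :
    ((∀ u : ZMod n, Function.Bijective (fun x : ZMod n => a + b * x + c * u) ∧
        Function.Bijective (fun y : ZMod n => a + b * u + c * y)) ∧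
      (∀ w x y z : ZMod n,
        a + b * (a + b * w + c * x) + c * (a + b * y + c * z) =
          a + b * (a + b * z + c * x) + c * (a + b * y + c * w))) ↔
    (b ^ 2 = c ^ 2 ∧ IsUnit b ∧ IsUnit c) :=
  stmt_6_general n a b c
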